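/- Any two triangulations of a convex polygon (dissections of an (n+2)-gon into triangles by non-crossing diagonals) are connected by a sequence of diagonal flips. -/

import Mathlib

/-!
Every triangulation can be flipped to the fan of all diagonals at vertex `0`; since flips are
reversible, any two triangulations are then connected through the fan. While some diagonal of `D`
avoids vertex `0`, take the longest such diagonal `(a, b)`. A diagonal crossing `(0, a)` or
`(0, b)` would cross `(a, b)` or be longer, so both are edges of `D`; and `(a, b)` borders a
triangle `a t b` of `D` with `a < t < b`. Flipping `(a, b)` to `(0, t)` inside the quadrilateral
`0 a t b` lowers the number of diagonals avoiding `0`.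
-/

namespace PolygonFlips

variable (m : ℕ)

/-- A diagonal of the convex `m`-gon with vertices `0, 1, …, m-1` in convex
position: an ordered pair `(a, b)` with `a < b`, joining non-adjacent vertices. -/
def IsDiagonal (e : Fin m × Fin m) : Prop :=
  e.1.val + 2 ≤ e.2.val ∧ ¬(e.1.val = 0 ∧ e.2.val + 1 = m)

/-- Two diagonals of a convex polygon cross iff their endpoints interlace along
the boundary circle. -/
def Crosses (e f : Fin m × Fin m) : Prop :=
  (e.1.val < f.1.val ∧ f.1.val < e.2.val ∧ e.2.val < f.2.val) ∨
  (f.1.val < e.1.val ∧ e.1.val < f.2.val ∧ f.2.val < e.2.val)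

/-- A triangulation of the convex `m`-gon: a maximal set of pairwise
non-crossing diagonals. -/
def IsTriangulation (D : Finset (Fin m × Fin m)) : Prop :=
  (∀ e ∈ D, IsDiagonal m e) ∧
  (∀ e ∈ D, ∀ f ∈ D, ¬ Crosses m e f) ∧
  (∀ e, IsDiagonal m e → e ∉ D → ∃ f ∈ D, Crosses m e f ∨ Crosses m f e)

/-- A flip: remove one diagonal and insert another one so that the result is
again a triangulation. -/
def Flip (D D' : Finset (Fin m × Fin m)) : Prop :=
  ∃ d d', d ∈ D ∧ d' ∉ D ∧ D' = insert d' (D.erase d) ∧ IsTriangulation m D'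

section

variable {m : ℕ}

theorem crosses_comm {e f : Fin m × Fin m} : Crosses m e f ↔ Crosses m f e := by
  unfold Crosses
  exact or_comm

def IsPolygonSide (e : Fin m × Fin m) : Prop :=
  e.2.val = e.1.val + 1 ∨ (e.1.val = 0 ∧ e.2.val + 1 = m)

def IsEdge (D : Finset (Fin m × Fin m)) (e : Fin m × Fin m) : Prop :=
  e ∈ D ∨ IsPolygonSide e

theorem IsPolygonSide.not_crosses {e f : Fin m × Fin m} (he : IsPolygonSide e) :
    ¬ Crosses m e f := by
  have := f.2.isLt
  unfold IsPolygonSide at he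
  unfold Crosses
  omega

variable {D : Finset (Fin m × Fin m)}

theorem IsTriangulation.exists_crosses (hD : IsTriangulation m D) {e : Fin m × Fin m}
    (he : IsDiagonal m e) (heD : e ∉ D) : ∃ f ∈ D, Crosses m e f := by
  obtain ⟨f, hf, hef⟩ := hD.2.2 e he heD
  exact ⟨f, hf, hef.elim id crosses_comm.1⟩

theorem IsEdge.not_crosses (hD : IsTriangulation m D) {e f : Fin m × Fin m}
    (he : IsEdge D e) (hf : f ∈ D) : ¬ Crosses m e f :=
  he.elim (fun he => hD.2.1 e he f hf) IsPolygonSide.not_crosses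

theorem IsEdge.mem_of_crosses {e f : Fin m × Fin m} (he : IsEdge D e) (hef : Crosses m f e) :
    e ∈ D :=
  he.resolve_right fun hside => hside.not_crosses (crosses_comm.1 hef)

theorem IsTriangulation.isEdge_of_forall_not_crosses (hD : IsTriangulation m D)
    {e : Fin m × Fin m} (hlt : e.1 < e.2) (h : ∀ f ∈ D, ¬ Crosses m e f) : IsEdge D e := by
  by_cases hside : IsPolygonSide e
  · exact Or.inr hside
  have he : IsDiagonal m e := by
    unfold IsPolygonSide at hside
    unfold IsDiagonal
    omega
  by_contra hne
  obtain ⟨f, hf, hef⟩ := hD.exists_crosses he fun heD => hne (Or.inl heD)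
  exact h f hf hef

theorem Crosses.crosses_side_of_quadrilateral {p q r s : Fin m} {e : Fin m × Fin m}
    (hpq : p < q) (hqr : q < r) (he : Crosses m e (q, s)) (hne : e ≠ (p, r)) :
    Crosses m e (p, r) ∨ Crosses m e (p, q) ∨ Crosses m e (q, r) ∨ Crosses m e (r, s) ∨
      Crosses m e (p, s) := by
  have hne' : e.1 ≠ p ∨ e.2 ≠ r := not_and_or.1 fun h => hne (Prod.ext h.1 h.2)
  simp only [Crosses] at he ⊢
  rcases he with h | h <;> omega

theorem IsTriangulation.not_crosses_of_quadrilateral (hD : IsTriangulation m D)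
    {p q r s : Fin m} (hpq : p < q) (hqr : q < r) (hrs : r < s) (hqs : (q, s) ∈ D)
    (hpq' : IsEdge D (p, q)) (hqr' : IsEdge D (q, r)) (hrs' : IsEdge D (r, s))
    (hps' : IsEdge D (p, s)) {f : Fin m × Fin m} (hf : f ∈ D) (hne : f ≠ (q, s)) :
    ¬ Crosses m (p, r) f := by
  have hne' : f.1 ≠ q ∨ f.2 ≠ s := not_and_or.1 fun h => hne (Prod.ext h.1 h.2)
  have := hD.2.1 _ hqs f hf
  have := hpq'.not_crosses hD hf
  have := hqr'.not_crosses hD hf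
  have := hrs'.not_crosses hD hf
  have := hps'.not_crosses hD hf
  have := f.2.isLt
  simp only [Crosses] at *
  omega

theorem IsTriangulation.flip_of_quadrilateral (hD : IsTriangulation m D) {p q r s : Fin m}
    (hpq : p < q) (hqr : q < r) (hrs : r < s) (hqs : (q, s) ∈ D)
    (hpq' : IsEdge D (p, q)) (hqr' : IsEdge D (q, r)) (hrs' : IsEdge D (r, s))
    (hps' : IsEdge D (p, s)) : Flip m D (insert (p, r) (D.erase (q, s))) := by
  have hcross : Crosses m (p, r) (q, s) := by
    simp only [Crosses]
    omega
  have hnew : ∀ f ∈ D, f ≠ (q, s) → ¬ Crosses m (p, r) f := fun f hf hne =>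
    hD.not_crosses_of_quadrilateral hpq hqr hrs hqs hpq' hqr' hrs' hps' hf hne
  refine ⟨(q, s), (p, r), hqs, fun hpr => hD.2.1 _ hpr _ hqs hcross, rfl, ?_, ?_, ?_⟩
  · simp only [Finset.forall_mem_insert]
    refine ⟨?_, fun e he => hD.1 e (Finset.mem_of_mem_erase he)⟩
    have := s.isLt
    simp only [IsDiagonal]
    omega
  · simp only [Finset.forall_mem_insert, Finset.mem_erase]
    refine ⟨⟨fun h => by simp only [Crosses] at h; omega, fun f ⟨hne, hf⟩ => hnew f hf hne⟩,
      fun e ⟨hne, he⟩ => ⟨fun h => hnew e he hne (crosses_comm.1 h),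
        fun f ⟨_, hf⟩ => hD.2.1 e he f hf⟩⟩
  · intro e he heD'
    simp only [Finset.mem_insert, Finset.mem_erase, not_or, not_and_or, not_not] at heD'
    obtain ⟨hne, heqs | heD⟩ := heD'
    · exact ⟨(p, r), Finset.mem_insert_self _ _, Or.inr (heqs ▸ hcross)⟩
    obtain ⟨f, hf, hef⟩ := hD.exists_crosses he heD
    by_cases hfqs : f = (q, s)
    · subst hfqs
      have hside : ∀ g, IsEdge D g → g ≠ (q, s) → Crosses m e g →
          ∃ f ∈ insert (p, r) (D.erase (q, s)), Crosses m e f ∨ Crosses m f e :=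
        fun g hg hgqs h =>
          ⟨g, Finset.mem_insert_of_mem (Finset.mem_erase.2 ⟨hgqs, hg.mem_of_crosses h⟩), Or.inl h⟩
      rcases hef.crosses_side_of_quadrilateral hpq hqr hne with h | h | h | h | h
      · exact ⟨(p, r), Finset.mem_insert_self _ _, Or.inl h⟩
      · exact hside _ hpq' (by simp [hpq.ne]) h
      · exact hside _ hqr' (by simp [hrs.ne]) h
      · exact hside _ hrs' (by simp [hqr.ne']) h
      · exact hside _ hps' (by simp [hpq.ne]) h
    · exact ⟨f, Finset.mem_insert_of_mem (Finset.mem_erase.2 ⟨hfqs, hf⟩), Or.inl hef⟩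

theorem IsTriangulation.exists_apex (hD : IsTriangulation m D) {a b : Fin m} (hab : (a, b) ∈ D) :
    ∃ t, a < t ∧ t < b ∧ IsEdge D (a, t) ∧ IsEdge D (t, b) := by
  classical
  have hdiag := hD.1 _ hab
  simp only [IsDiagonal] at hdiag
  let S := Finset.univ.filter fun k : Fin m => a < k ∧ k < b ∧ IsEdge D (a, k)
  have hS : (⟨a + 1, by omega⟩ : Fin m) ∈ S :=
    Finset.mem_filter.2 ⟨Finset.mem_univ _, by simp [Fin.lt_def], by simp [Fin.lt_def]; omega,
      Or.inr (Or.inl rfl)⟩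
  obtain ⟨t, ht, htmax⟩ := S.exists_max_image id ⟨_, hS⟩
  simp only [S, Finset.mem_filter, Finset.mem_univ, true_and, id] at ht htmax
  obtain ⟨hat, htb, hat'⟩ := ht
  refine ⟨t, hat, htb, hat', hD.isEdge_of_forall_not_crosses htb fun f hf h => ?_⟩
  by_cases hfa : f.1 = a
  · obtain ⟨f1, f2⟩ := f
    dsimp only at hfa
    subst hfa
    simp only [Crosses] at h
    have := htmax f2 ⟨by omega, by omega, Or.inl hf⟩
    omega
  · have := hD.2.1 _ hab f hf
    have := hat'.not_crosses hD hf
    simp only [Crosses] at *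
    omega

theorem IsTriangulation.isEdge_zero_of_longest (hD : IsTriangulation m D) {o a b : Fin m}
    (ho : o.val = 0) (ha : a.val ≠ 0) (hab : (a, b) ∈ D)
    (hmax : ∀ f ∈ D, f.1.val ≠ 0 → f.2.val - f.1.val ≤ b.val - a.val) :
    IsEdge D (o, a) ∧ IsEdge D (o, b) := by
  have hdiag := hD.1 _ hab
  simp only [IsDiagonal] at hdiag
  refine ⟨hD.isEdge_of_forall_not_crosses (show o < a by omega) ?_,
    hD.isEdge_of_forall_not_crosses (show o < b by omega) ?_⟩ <;>
  · intro f hf h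
    have hf0 : f.1.val ≠ 0 := by
      simp only [Crosses] at h
      omega
    have := hmax f hf hf0
    have := hD.2.1 _ hab f hf
    simp only [Crosses] at *
    omega

def offZero (D : Finset (Fin m × Fin m)) : Finset (Fin m × Fin m) :=
  D.filter fun e => e.1.val ≠ 0

theorem IsTriangulation.exists_flip_card_offZero_lt (hD : IsTriangulation m D)
    (h : (offZero D).Nonempty) : ∃ D', Flip m D D' ∧ (offZero D').card < (offZero D).card := by
  obtain ⟨⟨a, b⟩, hab, hmax⟩ := (offZero D).exists_max_image (fun e => e.2.val - e.1.val) h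
  simp only [offZero, Finset.mem_filter] at hab hmax
  obtain ⟨habD, ha⟩ := hab
  let o : Fin m := ⟨0, a.pos⟩
  have hoa : o < a := by simp only [o, Fin.lt_def]; omega
  obtain ⟨hoa', hob'⟩ :=
    hD.isEdge_zero_of_longest (o := o) rfl ha habD fun f hf hf0 => hmax f ⟨hf, hf0⟩
  obtain ⟨t, hat, htb, hat', htb'⟩ := hD.exists_apex habD
  refine ⟨_, hD.flip_of_quadrilateral hoa hat htb habD hoa' hat' htb' hob', ?_⟩
  rw [offZero, Finset.filter_insert, if_neg (by simp [o]), Finset.filter_erase]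
  exact Finset.card_erase_lt_of_mem (Finset.mem_filter.2 ⟨habD, ha⟩)

theorem IsTriangulation.subset_of_offZero_eq_empty {D' : Finset (Fin m × Fin m)}
    (hD : IsTriangulation m D) (hD' : IsTriangulation m D') (h : offZero D = ∅)
    (h' : offZero D' = ∅) : D ⊆ D' := by
  intro e he
  by_contra he'
  obtain ⟨f, hf, hef⟩ := hD'.exists_crosses (hD.1 e he) he'
  have he0 := Finset.filter_eq_empty_iff.1 h he
  have hf0 := Finset.filter_eq_empty_iff.1 h' hf
  simp only [Crosses] at hef
  omega

theorem Flip.isTriangulation {D' : Finset (Fin m × Fin m)} (h : Flip m D D') :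
    IsTriangulation m D' :=
  let ⟨_, _, _, _, _, hD'⟩ := h
  hD'

theorem Flip.symm {D' : Finset (Fin m × Fin m)} (hD : IsTriangulation m D) (h : Flip m D D') :
    Flip m D' D := by
  obtain ⟨d, d', hd, hd', rfl, -⟩ := h
  have hdd' : d ≠ d' := fun h => hd' (h ▸ hd)
  refine ⟨d', d, Finset.mem_insert_self _ _, ?_, ?_, hD⟩
  · simp [hdd']
  · rw [Finset.erase_insert fun h => hd' (Finset.mem_of_mem_erase h), Finset.insert_erase hd]

theorem reflTransGen_flip_symm {E : Finset (Fin m × Fin m)} (hD : IsTriangulation m D)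
    (h : Relation.ReflTransGen (Flip m) D E) : Relation.ReflTransGen (Flip m) E D := by
  induction h using Relation.ReflTransGen.head_induction_on with
  | refl => exact .refl
  | head hstep _ ih => exact (ih hstep.isTriangulation).tail (hstep.symm hD)

theorem IsTriangulation.exists_reflTransGen_offZero_eq_empty {D : Finset (Fin m × Fin m)}
    (hD : IsTriangulation m D) :
    ∃ F, IsTriangulation m F ∧ offZero F = ∅ ∧ Relation.ReflTransGen (Flip m) D F := by
  rcases (offZero D).eq_empty_or_nonempty with h | h
  · exact ⟨D, hD, h, .refl⟩
  obtain ⟨D', hflip, hlt⟩ := hD.exists_flip_card_offZero_lt h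
  obtain ⟨F, hF, hF0, hD'F⟩ := hflip.isTriangulation.exists_reflTransGen_offZero_eq_empty
  exact ⟨F, hF, hF0, .head hflip hD'F⟩
termination_by (offZero D).card

end

theorem flip_graph_connected (D D' : Finset (Fin m × Fin m))
    (hD : IsTriangulation m D) (hD' : IsTriangulation m D') :
    Relation.ReflTransGen (Flip m) D D' := by
  obtain ⟨F, hF, hF0, hDF⟩ := hD.exists_reflTransGen_offZero_eq_empty
  obtain ⟨F', hF', hF'0, hD'F'⟩ := hD'.exists_reflTransGen_offZero_eq_empty
  have hFF' : F = F' := (hF.subset_of_offZero_eq_empty hF' hF0 hF'0).antisymm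
    (hF'.subset_of_offZero_eq_empty hF hF'0 hF0)
  exact hDF.trans (hFF' ▸ reflTransGen_flip_symm hD' hD'F')

end PolygonFlips
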